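/- (Theorem 5.1, transient performance bound) For all t ≥ 0, ‖e(t) + x̃(t)‖_∞ ≤ √(ε_V / λ_min(P)) · (1 + √(κ λ_max(P) / (2 ξ λ_min(R)))), where ε_V := γ^{-1} ‖W̃(0) Λ^{1/2}‖_F² + λ_max(P) ‖e(0)‖₂²; since x(t) − x_ri(t) = e(t) + x̃(t), this bounds the L∞ distance between the plant state and the ideal reference state. -/

import Mathlib

/-!
The augmented function `Vstar` is a Lyapunov function for the closed loop. Along trajectories the
Lyapunov equation turns the `Ar`-terms into `-eᵀRe`, `-e_LᵀRe_L`, `-x̃ᵀRx̃`; the adaptive law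
makes the derivative of the weight term cancel the uncertainty term `-BΛW̃ᵀσ`; the filter
contributes `-2κ (e - e_L)ᵀP(e - e_L)`; and the only indefinite term, `2cκ x̃ᵀP(e - e_L)`, is
absorbed by Young's inequality, which costs `c x̃ᵀRx̃ + 2ξκ (e - e_L)ᵀP(e - e_L)` and is affordable
because `ξ < 1`. Hence `Vstar(t) ≤ Vstar(0) = V(e(0), W̃(0)) ≤ ε_V`, which bounds both `eᵀPe` and
`c x̃ᵀPx̃` by `ε_V`; the Rayleigh bounds turn these into bounds on `‖e‖₂` and `‖x̃‖₂`, and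
`‖·‖_∞ ≤ ‖·‖₂`.
-/

open Matrix Filter

noncomputable section

/-- Euclidean norm ‖·‖₂ of a vector. -/
def norm2 {n : ℕ} (v : Fin n → ℝ) : ℝ := Real.sqrt (∑ i, v i ^ 2)

/-- Supremum (infinity) norm ‖·‖_∞ of a vector (the sup norm on `Fin n → ℝ`). -/
def normInf {n : ℕ} (v : Fin n → ℝ) : ℝ := ‖v‖

/-- Frobenius norm ‖·‖_F of a matrix. -/
def normF {N m : ℕ} (W : Matrix (Fin N) (Fin m) ℝ) : ℝ := Real.sqrt (∑ i, ∑ j, W i j ^ 2)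

/-- Smallest eigenvalue λ_min of a real symmetric (Hermitian) matrix. -/
def lamMin {n : ℕ} {A : Matrix (Fin n) (Fin n) ℝ} (hA : A.IsHermitian) : ℝ := ⨅ i, hA.eigenvalues i

/-- Largest eigenvalue λ_max of a real symmetric (Hermitian) matrix. -/
def lamMax {n : ℕ} {A : Matrix (Fin n) (Fin n) ℝ} (hA : A.IsHermitian) : ℝ := ⨆ i, hA.eigenvalues i

/-- A real square matrix is Hurwitz if every (complex) eigenvalue has negative real part. -/
def Hurwitz {n : ℕ} (A : Matrix (Fin n) (Fin n) ℝ) : Prop :=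
  ∀ μ : ℂ, (A.map Complex.ofReal).charpoly.IsRoot μ → μ.re < 0

/-- The Lyapunov function V(e, W̃) = eᵀ P e + γ⁻¹ tr((W̃ Λ^{1/2})ᵀ (W̃ Λ^{1/2})). -/
def Vlyap {n N m : ℕ} (γ : ℝ) (P : Matrix (Fin n) (Fin n) ℝ)
    (Lhalf : Matrix (Fin m) (Fin m) ℝ) (e : Fin n → ℝ) (W : Matrix (Fin N) (Fin m) ℝ) : ℝ :=
  e ⬝ᵥ (P *ᵥ e) + γ⁻¹ * ((W * Lhalf)ᵀ * (W * Lhalf)).trace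

/-- The augmented Lyapunov function V* of Theorem 5.1. -/
def Vstar {n N m : ℕ} (γ κ η ξ : ℝ) (P R : Matrix (Fin n) (Fin n) ℝ)
    (hP : P.IsHermitian) (hR : R.IsHermitian)
    (Lhalf : Matrix (Fin m) (Fin m) ℝ)
    (e : Fin n → ℝ) (W : Matrix (Fin N) (Fin m) ℝ) (eL xt : Fin n → ℝ) : ℝ :=
  Vlyap γ P Lhalf e W + η⁻¹ * κ * (eL ⬝ᵥ (P *ᵥ eL))
    + 2 * ξ * κ⁻¹ * (lamMax hP)⁻¹ * lamMin hR * (xt ⬝ᵥ (P *ᵥ xt))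

section Norms

variable {n : ℕ}

lemma sq_norm2 (v : Fin n → ℝ) : norm2 v ^ 2 = ∑ i, v i ^ 2 :=
  Real.sq_sqrt (by positivity)

lemma norm2_eq_norm_toLp (v : Fin n → ℝ) : norm2 v = ‖WithLp.toLp 2 v‖ := by
  simp [norm2, EuclideanSpace.norm_eq, sq_abs]

lemma norm2_add_le (v w : Fin n → ℝ) : norm2 (v + w) ≤ norm2 v + norm2 w := by
  simpa only [norm2_eq_norm_toLp, WithLp.toLp_add] using norm_add_le _ _

lemma normInf_le_norm2 (v : Fin n → ℝ) : normInf v ≤ norm2 v :=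
  (pi_norm_le_iff_of_nonneg (Real.sqrt_nonneg _)).2 fun i =>
    Real.abs_le_sqrt (Finset.single_le_sum (fun j _ => sq_nonneg (v j)) (Finset.mem_univ i))

end Norms

section Quadratic

variable {n : ℕ} {A P R : Matrix (Fin n) (Fin n) ℝ}

lemma Matrix.IsHermitian.exists_dotProduct_mulVec_eq_sum_eigenvalues (hA : A.IsHermitian)
    (v : Fin n → ℝ) :
    ∃ w : Fin n → ℝ, ∑ i, w i ^ 2 = ∑ i, v i ^ 2 ∧
      v ⬝ᵥ A *ᵥ v = ∑ i, hA.eigenvalues i * w i ^ 2 := by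
  set U : Matrix (Fin n) (Fin n) ℝ := (hA.eigenvectorUnitary : Matrix (Fin n) (Fin n) ℝ)
  have hUt : star U = Uᵀ := conjTranspose_eq_transpose_of_trivial U
  have hUU : U * star U = 1 := Matrix.mem_unitaryGroup_iff.mp hA.eigenvectorUnitary.2
  refine ⟨v ᵥ* U, ?_, ?_⟩
  · have : (v ᵥ* U) ⬝ᵥ (v ᵥ* U) = v ⬝ᵥ v := by
      nth_rw 2 [← mulVec_transpose]
      rw [dotProduct_mulVec, vecMul_vecMul, ← hUt, hUU, vecMul_one]
    simpa [dotProduct, sq] using this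
  · conv_lhs => rw [hA.spectral_theorem, Unitary.conjStarAlgAut_apply]
    rw [← mulVec_mulVec, ← mulVec_mulVec, dotProduct_mulVec (A := U), hUt, mulVec_transpose]
    simp [mulVec_diagonal, dotProduct, sq, mul_left_comm]

lemma lamMin_mul_sq_norm2_le (hA : A.IsHermitian) (v : Fin n → ℝ) :
    lamMin hA * norm2 v ^ 2 ≤ v ⬝ᵥ A *ᵥ v := by
  obtain ⟨w, hw, hAv⟩ := hA.exists_dotProduct_mulVec_eq_sum_eigenvalues v
  rw [hAv, sq_norm2, ← hw, Finset.mul_sum]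
  gcongr with i
  exact ciInf_le (Set.finite_range _).bddBelow i

lemma dotProduct_mulVec_le_lamMax_mul_sq_norm2 (hA : A.IsHermitian) (v : Fin n → ℝ) :
    v ⬝ᵥ A *ᵥ v ≤ lamMax hA * norm2 v ^ 2 := by
  obtain ⟨w, hw, hAv⟩ := hA.exists_dotProduct_mulVec_eq_sum_eigenvalues v
  rw [hAv, sq_norm2, ← hw, Finset.mul_sum]
  gcongr with i
  exact le_ciSup (Set.finite_range _).bddAbove i

lemma lamMin_nonneg (hA : A.PosSemidef) : 0 ≤ lamMin hA.1 :=
  Real.iInf_nonneg hA.eigenvalues_nonneg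

lemma lamMax_nonneg (hA : A.PosSemidef) : 0 ≤ lamMax hA.1 :=
  Real.iSup_nonneg hA.eigenvalues_nonneg

lemma lamMin_pos [NeZero n] (hA : A.PosDef) : 0 < lamMin hA.1 := by
  obtain ⟨i, hi⟩ := exists_eq_ciInf_of_finite (f := hA.1.eigenvalues)
  rw [lamMin, ← hi]
  exact hA.eigenvalues_pos i

lemma lamMax_pos [NeZero n] (hA : A.PosDef) : 0 < lamMax hA.1 :=
  (hA.eigenvalues_pos 0).trans_le (le_ciSup (Set.finite_range _).bddAbove 0)

lemma norm2_le_sqrt_div_lamMin [NeZero n] (hP : P.PosDef) {x : Fin n → ℝ} {b : ℝ} (h : x ⬝ᵥ P *ᵥ x ≤ b) :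
    norm2 x ≤ Real.sqrt (b / lamMin hP.1) :=
  Real.le_sqrt_of_sq_le ((le_div_iff₀' (lamMin_pos hP)).2
    ((lamMin_mul_sq_norm2_le hP.1 x).trans h))

lemma Matrix.IsHermitian.dotProduct_mulVec_comm (hP : P.IsHermitian) (x y : Fin n → ℝ) :
    x ⬝ᵥ P *ᵥ y = y ⬝ᵥ P *ᵥ x := by
  have hPt : Pᵀ = P := (conjTranspose_eq_transpose_of_trivial P).symm.trans hP
  rw [dotProduct_mulVec, ← hPt, vecMul_transpose, dotProduct_comm, hPt]

lemma Matrix.PosSemidef.dotProduct_mulVec_self_nonneg (hP : P.PosSemidef) (x : Fin n → ℝ) :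
    0 ≤ x ⬝ᵥ P *ᵥ x := by
  simpa using hP.dotProduct_mulVec_nonneg x

lemma Matrix.PosSemidef.two_mul_dotProduct_mulVec_le (hP : P.PosSemidef) {ε : ℝ} (hε : 0 < ε)
    (x y : Fin n → ℝ) :
    2 * (x ⬝ᵥ P *ᵥ y) ≤ ε * (x ⬝ᵥ P *ᵥ x) + ε⁻¹ * (y ⬝ᵥ P *ᵥ y) := by
  have h := hP.dotProduct_mulVec_self_nonneg (ε • x - y)
  simp only [mulVec_sub, mulVec_smul, dotProduct_sub, sub_dotProduct, dotProduct_smul,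
    smul_dotProduct, smul_eq_mul, hP.1.dotProduct_mulVec_comm y x] at h
  calc 2 * (x ⬝ᵥ P *ᵥ y) = ε⁻¹ * (2 * ε * (x ⬝ᵥ P *ᵥ y)) := by field_simp
    _ ≤ ε⁻¹ * (ε ^ 2 * (x ⬝ᵥ P *ᵥ x) + y ⬝ᵥ P *ᵥ y) := by gcongr; linarith
    _ = ε * (x ⬝ᵥ P *ᵥ x) + ε⁻¹ * (y ⬝ᵥ P *ᵥ y) := by field_simp

lemma two_mul_dotProduct_mulVec_lyapunov {Ar : Matrix (Fin n) (Fin n) ℝ} (hP : P.IsHermitian)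
    (hLyap : Arᵀ * P + P * Ar + R = 0) (x : Fin n → ℝ) :
    2 * (x ⬝ᵥ P *ᵥ (Ar *ᵥ x)) = -(x ⬝ᵥ R *ᵥ x) := by
  have h := congrArg (fun M => x ⬝ᵥ M *ᵥ x) hLyap
  simp only [add_mulVec, dotProduct_add, ← mulVec_mulVec, zero_mulVec, dotProduct_zero] at h
  rw [dotProduct_mulVec x Arᵀ, vecMul_transpose, ← hP.dotProduct_mulVec_comm] at h
  linarith

end Quadratic

section Derivatives

variable {ι : Type*} [Fintype ι] {t : ℝ}

lemma HasDerivAt.dotProduct {f g : ℝ → ι → ℝ} {f' g' : ι → ℝ} (hf : HasDerivAt f f' t)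
    (hg : HasDerivAt g g' t) :
    HasDerivAt (fun s => f s ⬝ᵥ g s) (f' ⬝ᵥ g t + f t ⬝ᵥ g') t := by
  have := HasDerivAt.fun_sum (u := Finset.univ) fun i _ =>
    (hasDerivAt_pi.1 hf i).fun_mul (hasDerivAt_pi.1 hg i)
  rw [Finset.sum_add_distrib] at this
  exact this

lemma HasDerivAt.mulVec {κ : Type*} (M : Matrix κ ι ℝ) {f : ℝ → ι → ℝ} {f' : ι → ℝ}
    (hf : HasDerivAt f f' t) : HasDerivAt (fun s => M *ᵥ f s) (M *ᵥ f') t :=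
  hasDerivAt_pi.2 fun k => by
    have := (hasDerivAt_const t (M k)).dotProduct hf
    rw [zero_dotProduct, zero_add] at this
    exact this

lemma Matrix.IsHermitian.hasDerivAt_dotProduct_mulVec_self {n : ℕ}
    {P : Matrix (Fin n) (Fin n) ℝ} (hP : P.IsHermitian) {f : ℝ → Fin n → ℝ} {f' : Fin n → ℝ}
    (hf : HasDerivAt f f' t) :
    HasDerivAt (fun s => f s ⬝ᵥ P *ᵥ f s) (2 * (f t ⬝ᵥ P *ᵥ f')) t := by
  refine (hf.dotProduct (hf.mulVec P)).congr_deriv ?_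
  rw [hP.dotProduct_mulVec_comm f']
  ring

lemma antitoneOn_Ici_of_hasDerivAt_nonpos {f f' : ℝ → ℝ} {a : ℝ}
    (hf : ∀ t ≥ a, HasDerivAt f (f' t) t) (hf' : ∀ t ≥ a, f' t ≤ 0) :
    AntitoneOn f (Set.Ici a) := by
  refine antitoneOn_of_hasDerivWithinAt_nonpos (f' := f') (convex_Ici a)
    (fun t ht => (hf t ht).continuousAt.continuousWithinAt) (fun t ht => ?_) (fun t ht => ?_)
  all_goals rw [interior_Ici] at ht
  · exact (hf t ht.le).hasDerivWithinAt
  · exact hf' t ht.le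

end Derivatives

section AdaptiveLaw

variable {n N m : ℕ} {t : ℝ}

lemma trace_transpose_mul_self (A : Matrix (Fin N) (Fin m) ℝ) :
    (Aᵀ * A).trace = ∑ i, ∑ j, A i j ^ 2 := by
  simp only [trace, diag_apply, mul_apply, transpose_apply, sq]
  exact Finset.sum_comm

lemma normF_sq (A : Matrix (Fin N) (Fin m) ℝ) : normF A ^ 2 = (Aᵀ * A).trace := by
  rw [normF, Real.sq_sqrt (by positivity), trace_transpose_mul_self]

lemma hasDerivAt_trace_transpose_mul_self_of_isDiag {W : ℝ → Matrix (Fin N) (Fin m) ℝ}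
    {L : Matrix (Fin m) (Fin m) ℝ} (hL : L.IsDiag) {σ : Fin N → ℝ} {u : Fin m → ℝ}
    (hW : ∀ i j, HasDerivAt (fun s => W s i j) (σ i * u j) t) :
    HasDerivAt (fun s => ((W s * L)ᵀ * (W s * L)).trace)
      (2 * (u ⬝ᵥ (L * L) *ᵥ ((W t)ᵀ *ᵥ σ))) t := by
  obtain ⟨d, rfl⟩ : ∃ d, L = diagonal d := ⟨_, hL.diagonal_diag.symm⟩
  simp only [trace_transpose_mul_self, mul_diagonal, mul_pow]
  have := HasDerivAt.fun_sum (u := Finset.univ) fun i _ => HasDerivAt.fun_sum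
    (u := Finset.univ) fun j _ => ((hW i j).pow 2).mul_const (d j ^ 2)
  refine this.congr_deriv ?_
  simp only [diagonal_mul_diagonal, dotProduct, mulVec_diagonal]
  simp only [mulVec, dotProduct, transpose_apply, Finset.mul_sum]
  rw [Finset.sum_comm]
  refine Finset.sum_congr rfl fun j _ => Finset.sum_congr rfl fun i _ => ?_
  push_cast
  ring

variable {γ : ℝ} {P : Matrix (Fin n) (Fin n) ℝ} {B : Matrix (Fin n) (Fin m) ℝ}
  {Lhalf : Matrix (Fin m) (Fin m) ℝ}

lemma hasDerivAt_Vlyap (hP : P.IsHermitian) (hL : Lhalf.IsDiag) (hγ : γ ≠ 0)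
    {e : ℝ → Fin n → ℝ} {W : ℝ → Matrix (Fin N) (Fin m) ℝ} {σ : Fin N → ℝ} {v : Fin n → ℝ}
    (he : HasDerivAt e (v - (B * (Lhalf * Lhalf) * (W t)ᵀ) *ᵥ σ) t)
    (hW : ∀ i j, HasDerivAt (fun s => W s i j) (γ * (σ i * (e t ᵥ* (P * B)) j)) t) :
    HasDerivAt (fun s => Vlyap γ P Lhalf (e s) (W s)) (2 * (e t ⬝ᵥ P *ᵥ v)) t := by
  have hW' : ∀ i j, HasDerivAt (fun s => W s i j) ((γ • σ) i * (e t ᵥ* (P * B)) j) t :=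
    fun i j => (hW i j).congr_deriv (by simp only [Pi.smul_apply, smul_eq_mul, mul_assoc])
  have htr := (hasDerivAt_trace_transpose_mul_self_of_isDiag hL hW').const_mul γ⁻¹
  refine ((hP.hasDerivAt_dotProduct_mulVec_self he).add htr).congr_deriv ?_
  have hcancel : e t ᵥ* (P * B) ⬝ᵥ (Lhalf * Lhalf) *ᵥ ((W t)ᵀ *ᵥ σ)
      = e t ⬝ᵥ P *ᵥ ((B * (Lhalf * Lhalf) * (W t)ᵀ) *ᵥ σ) := by
    simp only [dotProduct_mulVec, vecMul_vecMul, Matrix.mul_assoc]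
  rw [mulVec_smul, mulVec_smul, dotProduct_smul, smul_eq_mul, hcancel, mulVec_sub,
    dotProduct_sub]
  field_simp
  ring

end AdaptiveLaw

section ClosedLoop

variable {n N m : ℕ} {Ar P R : Matrix (Fin n) (Fin n) ℝ} {B : Matrix (Fin n) (Fin m) ℝ}
  {Lhalf : Matrix (Fin m) (Fin m) ℝ} {γ κ η ξ : ℝ}

lemma cross_term_le [NeZero n] (hP : P.PosDef) (hR : R.PosDef) (hκ : 0 < κ) (hξ : 0 ≤ ξ)
    (x y : Fin n → ℝ) :
    2 * (2 * ξ * κ⁻¹ * (lamMax hP.1)⁻¹ * lamMin hR.1) * κ * (x ⬝ᵥ P *ᵥ y)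
      ≤ 2 * ξ * κ⁻¹ * (lamMax hP.1)⁻¹ * lamMin hR.1 * (x ⬝ᵥ R *ᵥ x)
        + 2 * ξ * κ * (y ⬝ᵥ P *ᵥ y) := by
  set p := lamMax hP.1
  set s := lamMin hR.1
  have hp : 0 < p := lamMax_pos hP
  have hs : 0 < s := lamMin_pos hR
  -- Young's inequality with weight `s / (κ p)`, chosen so that `p ‖x‖²` is traded for `s ‖x‖²`.
  have hyoung := hP.posSemidef.two_mul_dotProduct_mulVec_le (div_pos hs (mul_pos hκ hp)) x y
  have hxP := dotProduct_mulVec_le_lamMax_mul_sq_norm2 hP.1 x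
  have hxR := lamMin_mul_sq_norm2_le hR.1 x
  have hPR : s / (κ * p) * (x ⬝ᵥ P *ᵥ x) ≤ κ⁻¹ * (x ⬝ᵥ R *ᵥ x) := by
    calc s / (κ * p) * (x ⬝ᵥ P *ᵥ x) ≤ s / (κ * p) * (p * norm2 x ^ 2) := by gcongr
      _ = κ⁻¹ * (s * norm2 x ^ 2) := by field_simp
      _ ≤ κ⁻¹ * (x ⬝ᵥ R *ᵥ x) := by gcongr
  have hc : 0 ≤ 2 * ξ * p⁻¹ * s := by positivity
  calc 2 * (2 * ξ * κ⁻¹ * p⁻¹ * s) * κ * (x ⬝ᵥ P *ᵥ y)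
      = (2 * ξ * p⁻¹ * s) * (2 * (x ⬝ᵥ P *ᵥ y)) := by field_simp
    _ ≤ (2 * ξ * p⁻¹ * s) * (s / (κ * p) * (x ⬝ᵥ P *ᵥ x) + (s / (κ * p))⁻¹ * (y ⬝ᵥ P *ᵥ y)) :=
        by gcongr
    _ ≤ (2 * ξ * p⁻¹ * s) * (κ⁻¹ * (x ⬝ᵥ R *ᵥ x) + (s / (κ * p))⁻¹ * (y ⬝ᵥ P *ᵥ y)) := by gcongr
    _ = _ := by field_simp

lemma hasDerivAt_Vstar (hP : P.IsHermitian) (hR : R.IsHermitian) (hL : Lhalf.IsDiag)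
    (hγ : γ ≠ 0) {e eL xt : ℝ → Fin n → ℝ} {W : ℝ → Matrix (Fin N) (Fin m) ℝ}
    {σ : Fin N → ℝ} {t : ℝ}
    (he : HasDerivAt e
      (Ar *ᵥ e t - (B * (Lhalf * Lhalf) * (W t)ᵀ) *ᵥ σ - κ • (e t - eL t)) t)
    (hW : ∀ i j, HasDerivAt (fun s => W s i j) (γ * (σ i * (e t ᵥ* (P * B)) j)) t)
    (heL : HasDerivAt eL (Ar *ᵥ eL t + η • (e t - eL t)) t)
    (hxt : HasDerivAt xt (Ar *ᵥ xt t + κ • (e t - eL t)) t) :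
    HasDerivAt (fun s => Vstar γ κ η ξ P R hP hR Lhalf (e s) (W s) (eL s) (xt s))
      (2 * (e t ⬝ᵥ P *ᵥ (Ar *ᵥ e t - κ • (e t - eL t)))
        + η⁻¹ * κ * (2 * (eL t ⬝ᵥ P *ᵥ (Ar *ᵥ eL t + η • (e t - eL t))))
        + 2 * ξ * κ⁻¹ * (lamMax hP)⁻¹ * lamMin hR
          * (2 * (xt t ⬝ᵥ P *ᵥ (Ar *ᵥ xt t + κ • (e t - eL t))))) t := by
  rw [sub_right_comm] at he
  exact ((hasDerivAt_Vlyap hP hL hγ he hW).add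
    ((hP.hasDerivAt_dotProduct_mulVec_self heL).const_mul _)).add
    ((hP.hasDerivAt_dotProduct_mulVec_self hxt).const_mul _)

lemma Vstar_deriv_nonpos [NeZero n] (hP : P.PosDef) (hR : R.PosDef)
    (hLyap : Arᵀ * P + P * Ar + R = 0) (hκ : 0 < κ) (hη : 0 < η) (hξ0 : 0 < ξ) (hξ1 : ξ < 1)
    (e eL xt : Fin n → ℝ) :
    2 * (e ⬝ᵥ P *ᵥ (Ar *ᵥ e - κ • (e - eL)))
        + η⁻¹ * κ * (2 * (eL ⬝ᵥ P *ᵥ (Ar *ᵥ eL + η • (e - eL))))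
        + 2 * ξ * κ⁻¹ * (lamMax hP.1)⁻¹ * lamMin hR.1
          * (2 * (xt ⬝ᵥ P *ᵥ (Ar *ᵥ xt + κ • (e - eL)))) ≤ 0 := by
  set c := 2 * ξ * κ⁻¹ * (lamMax hP.1)⁻¹ * lamMin hR.1
  set δ := e - eL
  have hLe := two_mul_dotProduct_mulVec_lyapunov hP.1 hLyap e
  have hLeL := two_mul_dotProduct_mulVec_lyapunov hP.1 hLyap eL
  have hLxt := two_mul_dotProduct_mulVec_lyapunov hP.1 hLyap xt
  have hδ : e ⬝ᵥ P *ᵥ δ - eL ⬝ᵥ P *ᵥ δ = δ ⬝ᵥ P *ᵥ δ := by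
    simp only [δ, sub_dotProduct]
  have hcross := cross_term_le hP hR hκ hξ0.le xt δ
  have hRe := hR.posSemidef.dotProduct_mulVec_self_nonneg e
  have hReL := mul_nonneg (by positivity : 0 ≤ η⁻¹ * κ)
    (hR.posSemidef.dotProduct_mulVec_self_nonneg eL)
  have hPδ := mul_nonneg (mul_nonneg (sub_nonneg.2 hξ1.le) hκ.le)
    (hP.posSemidef.dotProduct_mulVec_self_nonneg δ)
  have hη' : η⁻¹ * η = 1 := inv_mul_cancel₀ hη.ne'
  simp only [mulVec_sub, mulVec_add, mulVec_smul, dotProduct_sub, dotProduct_add,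
    dotProduct_smul, smul_eq_mul]
  linear_combination hLe + η⁻¹ * κ * hLeL + c * hLxt + hcross + hRe + hReL + 2 * hPδ
    - 2 * κ * hδ + 2 * κ * (eL ⬝ᵥ P *ᵥ δ) * hη'

lemma Vstar_zero_le (hP : P.IsHermitian) (hR : R.IsHermitian) (x : Fin n → ℝ)
    (W : Matrix (Fin N) (Fin m) ℝ) :
    Vstar γ κ η ξ P R hP hR Lhalf x W 0 0
      ≤ γ⁻¹ * normF (W * Lhalf) ^ 2 + lamMax hP * norm2 x ^ 2 := by
  simp only [Vstar, Vlyap, normF_sq, mulVec_zero, dotProduct_zero, mul_zero, add_zero]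
  linarith [dotProduct_mulVec_le_lamMax_mul_sq_norm2 hP x]

lemma dotProduct_mulVec_le_of_Vstar_le (hP : P.PosDef) (hR : R.PosDef) (hγ : 0 < γ)
    (hκ : 0 < κ) (hη : 0 < η) (hξ : 0 < ξ) {e eL xt : Fin n → ℝ}
    {W : Matrix (Fin N) (Fin m) ℝ} {b : ℝ}
    (h : Vstar γ κ η ξ P R hP.1 hR.1 Lhalf e W eL xt ≤ b) :
    e ⬝ᵥ P *ᵥ e ≤ b ∧
      2 * ξ * κ⁻¹ * (lamMax hP.1)⁻¹ * lamMin hR.1 * (xt ⬝ᵥ P *ᵥ xt) ≤ b := by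
  have hW : 0 ≤ γ⁻¹ * ((W * Lhalf)ᵀ * (W * Lhalf)).trace := by
    rw [← normF_sq]; positivity
  have he := hP.posSemidef.dotProduct_mulVec_self_nonneg e
  have heL := mul_nonneg (by positivity : 0 ≤ η⁻¹ * κ)
    (hP.posSemidef.dotProduct_mulVec_self_nonneg eL)
  have hc : 0 ≤ 2 * ξ * κ⁻¹ * (lamMax hP.1)⁻¹ * lamMin hR.1 :=
    mul_nonneg (mul_nonneg (by positivity) (inv_nonneg.2 (lamMax_nonneg hP.posSemidef)))
      (lamMin_nonneg hR.posSemidef)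
  have hxt := mul_nonneg hc (hP.posSemidef.dotProduct_mulVec_self_nonneg xt)
  simp only [Vstar, Vlyap] at h
  constructor <;> linarith

lemma norm2_add_norm2_le_of_Vstar_le [NeZero n] (hP : P.PosDef) (hR : R.PosDef) (hγ : 0 < γ)
    (hκ : 0 < κ) (hη : 0 < η) (hξ : 0 < ξ) {e eL xt : Fin n → ℝ}
    {W : Matrix (Fin N) (Fin m) ℝ} {b : ℝ}
    (h : Vstar γ κ η ξ P R hP.1 hR.1 Lhalf e W eL xt ≤ b) :
    norm2 e + norm2 xt
      ≤ Real.sqrt (b / lamMin hP.1)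
        * (1 + Real.sqrt (κ * lamMax hP.1 / (2 * ξ * lamMin hR.1))) := by
  obtain ⟨hPe, hPxt⟩ := dotProduct_mulVec_le_of_Vstar_le hP hR hγ hκ hη hξ h
  have hp := lamMax_pos hP
  have hs := lamMin_pos hR
  have hxt := norm2_le_sqrt_div_lamMin hP ((le_div_iff₀' (by positivity)).2 hPxt)
  have hsplit : Real.sqrt (b / (2 * ξ * κ⁻¹ * (lamMax hP.1)⁻¹ * lamMin hR.1) / lamMin hP.1)
      = Real.sqrt (b / lamMin hP.1) * Real.sqrt (κ * lamMax hP.1 / (2 * ξ * lamMin hR.1)) := by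
    rw [← Real.sqrt_mul' _ (by positivity)]
    field_simp
  rw [mul_one_add]
  exact add_le_add (norm2_le_sqrt_div_lamMin hP hPe) (hxt.trans_eq hsplit)

end ClosedLoop

theorem statement8_general
    {n N m : ℕ} (hn : 0 < n)
    (Ar : Matrix (Fin n) (Fin n) ℝ) (B : Matrix (Fin n) (Fin m) ℝ)
    (Lam Lhalf : Matrix (Fin m) (Fin m) ℝ) (R P : Matrix (Fin n) (Fin n) ℝ)
    (hLhalfDiag : Lhalf.IsDiag) (hLhalfSq : Lhalf * Lhalf = Lam)
    (hR : R.PosDef) (hP : P.PosDef)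
    (hLyap : Arᵀ * P + P * Ar + R = 0)
    (γ κ η ξ : ℝ) (hγ : 0 < γ) (hκ : 0 < κ) (hη : 0 < η) (hξ0 : 0 < ξ) (hξ1 : ξ < 1)
    (σx : ℝ → Fin N → ℝ)
    (e eL xt : ℝ → Fin n → ℝ) (Wt : ℝ → Matrix (Fin N) (Fin m) ℝ)
    (heL0 : eL 0 = 0) (hxt0 : xt 0 = 0)
    (he : ∀ t ≥ (0:ℝ), HasDerivAt e
          (Ar *ᵥ e t - (B * Lam * (Wt t)ᵀ) *ᵥ σx t - κ • (e t - eL t)) t)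
    (hW : ∀ t ≥ (0:ℝ), ∀ i j, HasDerivAt (fun s => Wt s i j)
          (γ * (σx t i * ((e t) ᵥ* (P * B)) j)) t)
    (heL : ∀ t ≥ (0:ℝ), HasDerivAt eL (Ar *ᵥ eL t + η • (e t - eL t)) t)
    (hxt : ∀ t ≥ (0:ℝ), HasDerivAt xt (Ar *ᵥ xt t + κ • (e t - eL t)) t)
    : ∀ t ≥ (0:ℝ),
      normInf (e t + xt t)
        ≤ Real.sqrt ((γ⁻¹ * normF (Wt 0 * Lhalf) ^ 2 + lamMax hP.1 * norm2 (e 0) ^ 2)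
              / lamMin hP.1)
          * (1 + Real.sqrt (κ * lamMax hP.1 / (2 * ξ * lamMin hR.1))) := by
  have : NeZero n := ⟨hn.ne'⟩
  subst hLhalfSq
  set V := fun t => Vstar γ κ η ξ P R hP.1 hR.1 Lhalf (e t) (Wt t) (eL t) (xt t)
  have hV_anti : AntitoneOn V (Set.Ici 0) := antitoneOn_Ici_of_hasDerivAt_nonpos
    (fun t ht => hasDerivAt_Vstar hP.1 hR.1 hLhalfDiag hγ.ne' (he t ht) (hW t ht) (heL t ht)
      (hxt t ht))
    (fun t _ => Vstar_deriv_nonpos hP hR hLyap hκ hη hξ0 hξ1 _ _ _)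
  intro t ht
  have hVt : V t ≤ γ⁻¹ * normF (Wt 0 * Lhalf) ^ 2 + lamMax hP.1 * norm2 (e 0) ^ 2 := calc
    V t ≤ V 0 := hV_anti Set.self_mem_Ici ht ht
    _ ≤ _ := by simpa only [V, heL0, hxt0] using Vstar_zero_le hP.1 hR.1 (e 0) (Wt 0)
  calc normInf (e t + xt t) ≤ norm2 (e t) + norm2 (xt t) :=
        (normInf_le_norm2 _).trans (norm2_add_le _ _)
    _ ≤ _ := norm2_add_norm2_le_of_Vstar_le hP hR hγ hκ hη hξ0 hVt

theorem statement8
    {n N m : ℕ} (hn : 0 < n) (hN : 0 < N) (hm : 0 < m)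
    (Ar : Matrix (Fin n) (Fin n) ℝ) (B : Matrix (Fin n) (Fin m) ℝ)
    (Lam Lhalf : Matrix (Fin m) (Fin m) ℝ) (R P : Matrix (Fin n) (Fin n) ℝ)
    (hAr : Hurwitz Ar)
    (hLam : Lam.PosDef) (hLamDiag : Lam.IsDiag)
    (hLhalfDiag : Lhalf.IsDiag) (hLhalfSq : Lhalf * Lhalf = Lam)
    (hR : R.PosDef) (hP : P.PosDef)
    (hLyap : Arᵀ * P + P * Ar + R = 0)
    (γ κ η ξ : ℝ) (hγ : 0 < γ) (hκ : 0 < κ) (hη : 0 < η) (hξ0 : 0 < ξ) (hξ1 : ξ < 1)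
    (σx : ℝ → Fin N → ℝ)
    (e eL xt : ℝ → Fin n → ℝ) (Wt : ℝ → Matrix (Fin N) (Fin m) ℝ)
    (heL0 : eL 0 = 0) (hxt0 : xt 0 = 0)
    (he : ∀ t ≥ (0:ℝ), HasDerivAt e
          (Ar *ᵥ e t - (B * Lam * (Wt t)ᵀ) *ᵥ σx t - κ • (e t - eL t)) t)
    (hW : ∀ t ≥ (0:ℝ), ∀ i j, HasDerivAt (fun s => Wt s i j)
          (γ * (σx t i * ((e t) ᵥ* (P * B)) j)) t)
    (heL : ∀ t ≥ (0:ℝ), HasDerivAt eL (Ar *ᵥ eL t + η • (e t - eL t)) t)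
    (hxt : ∀ t ≥ (0:ℝ), HasDerivAt xt (Ar *ᵥ xt t + κ • (e t - eL t)) t)
    : ∀ t ≥ (0:ℝ),
      normInf (e t + xt t)
        ≤ Real.sqrt ((γ⁻¹ * normF (Wt 0 * Lhalf) ^ 2 + lamMax hP.1 * norm2 (e 0) ^ 2)
              / lamMin hP.1)
          * (1 + Real.sqrt (κ * lamMax hP.1 / (2 * ξ * lamMin hR.1))) :=
  statement8_general hn Ar B Lam Lhalf R P hLhalfDiag hLhalfSq hR hP hLyap γ κ η ξ hγ hκ hη hξ0 hξ1
    σx e eL xt Wt heL0 hxt0 he hW heL hxt
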